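/- arXiv:2208.07671 — 2 statements merged into one kernel-verified Lean document; each statement's English description precedes it below -/
import Mathlib

section
/- If the trust-bias parameters satisfy ε_k⁺ ≠ 1 or ε_k⁻ ≠ 0 for some displayed position k, then the IPW estimator (1/D) Σ c/θ_k using the true examination propensities θ_k is in general biased: its expectation equals γ_{q,d} + (1/D) Σ_k ((ε_k⁺ - ε_k⁻ - 1)γ_{q,d} + ε_k⁻), which differs from γ_{q,d} unless the trust-bias correction terms vanish. -/
/-- Expectation over D independent Bernoulli clicks with success probabilities `p i`. -/
noncomputable def expec {D : ℕ} (p : Fin D → ℝ) (f : (Fin D → Bool) → ℝ) : ℝ :=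
  ∑ c : Fin D → Bool, (∏ i, if c i then p i else 1 - p i) * f c

section expec

variable {D : ℕ} (p : Fin D → ℝ)

theorem expec_mul_left (a : ℝ) (f : (Fin D → Bool) → ℝ) :
    expec p (fun c => a * f c) = a * expec p f := by
  simp only [expec, Finset.mul_sum]
  exact Finset.sum_congr rfl fun c _ => by ring

theorem expec_sum {ι : Type*} (s : Finset ι) (f : ι → (Fin D → Bool) → ℝ) :
    expec p (fun c => ∑ i ∈ s, f i c) = ∑ i ∈ s, expec p (f i) := by
  simp only [expec, Finset.mul_sum]
  exact Finset.sum_comm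

theorem expec_indicator (i : Fin D) :
    expec p (fun c => if c i then 1 else 0) = p i := by
  -- Fold the indicator into the `i`-th factor, so that the sum over `c` factorizes coordinatewise.
  let g : Fin D → Bool → ℝ := fun j b =>
    (if b then p j else 1 - p j) * if j = i then (if b then 1 else 0) else 1
  have hfold (c : Fin D → Bool) :
      (∏ j, if c j then p j else 1 - p j) * (if c i then 1 else 0) = ∏ j, g j (c j) := by
    rw [Finset.prod_mul_distrib, Finset.prod_ite_eq' Finset.univ i fun j => if c j then 1 else 0]
    simp
  have hmarginal : ∏ j, ∑ b, g j b = p i := by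
    rw [Finset.prod_eq_single i (fun j _ hj => by simp [g, hj]) (by simp)]
    simp [g]
  simp only [expec, hfold]
  rw [← Fintype.prod_sum, hmarginal]

end expec

theorem ipw_trust_biased_general (D : ℕ) (hD : 0 < D) (ks : Fin D → ℕ)
    (θ εp εm : ℕ → ℝ) (γ : ℝ)
    (hθpos : ∀ k, 0 < θ k) :
    expec (fun i => θ (ks i) * ((εp (ks i) - εm (ks i)) * γ + εm (ks i)))
      (fun c => (1 / (D : ℝ)) * ∑ i, (if c i then (1:ℝ) else 0) / θ (ks i))
    = γ + (1 / (D : ℝ)) * ∑ i, ((εp (ks i) - εm (ks i) - 1) * γ + εm (ks i)) := by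
  have hreweight (i : Fin D) :
      (θ (ks i))⁻¹ * (θ (ks i) * ((εp (ks i) - εm (ks i)) * γ + εm (ks i)))
        = γ + ((εp (ks i) - εm (ks i) - 1) * γ + εm (ks i)) := by
    field_simp [(hθpos (ks i)).ne']
    ring
  simp_rw [expec_mul_left, expec_sum, div_eq_inv_mul, expec_mul_left, expec_indicator,
    hreweight, Finset.sum_add_distrib, Finset.sum_const, Finset.card_univ, Fintype.card_fin,
    nsmul_eq_mul]
  field_simp [(Nat.cast_pos.mpr hD).ne']

/-- under trust bias (ε⁺ ≠ 1 or ε⁻ ≠ 0 somewhere), the IPW estimator with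
true propensities has expectation γ + (1/D) Σ ((ε⁺-ε⁻-1)γ + ε⁻). -/
theorem ipw_trust_biased (D : ℕ) (hD : 0 < D) (ks : Fin D → ℕ)
    (θ εp εm : ℕ → ℝ) (γ : ℝ)
    (hθpos : ∀ k, 0 < θ k) (hθ1 : ∀ k, θ k ≤ 1)
    (hεp : ∀ k, εp k ∈ Set.Icc (0:ℝ) 1) (hεm : ∀ k, εm k ∈ Set.Icc (0:ℝ) 1)
    (hγ : γ ∈ Set.Icc (0:ℝ) 1)
    (hbias : ∃ i, εp (ks i) ≠ 1 ∨ εm (ks i) ≠ 0) :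
    expec (fun i => θ (ks i) * ((εp (ks i) - εm (ks i)) * γ + εm (ks i)))
      (fun c => (1 / (D : ℝ)) * ∑ i, (if c i then (1:ℝ) else 0) / θ (ks i))
    = γ + (1 / (D : ℝ)) * ∑ i, ((εp (ks i) - εm (ks i) - 1) * γ + εm (ks i)) :=
  ipw_trust_biased_general D hD ks θ εp εm γ hθpos
end

section
/- Doubly robustness: assume α̃_k = α_k for all positions k in the data (the examination-trust product is correctly estimated) and β̂_k = β_k. Then the doubly robust estimator is unbiased whenever EITHER (i) α̂_k = α_k for all k, OR (ii) the imputation model is perfect, γ̂^imp_{q,d} = γ_{q,d}. -/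
namespace expec

variable {D : ℕ} (p : Fin D → ℝ)

lemma sum_weights :
    ∑ c : Fin D → Bool, (∏ i, if c i then p i else 1 - p i) = 1 := by
  rw [← Fintype.prod_sum (fun i (b : Bool) => if b then p i else 1 - p i)]
  simp

lemma const (a : ℝ) : expec p (fun _ => a) = a := by
  rw [expec, ← Finset.sum_mul, sum_weights, one_mul]

lemma add (f g : (Fin D → Bool) → ℝ) :
    expec p (fun c => f c + g c) = expec p f + expec p g := by
  simp only [expec, mul_add, Finset.sum_add_distrib]

lemma sub (f g : (Fin D → Bool) → ℝ) :
    expec p (fun c => f c - g c) = expec p f - expec p g := by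
  simp only [expec, mul_sub, Finset.sum_sub_distrib]

lemma const_mul (a : ℝ) (f : (Fin D → Bool) → ℝ) :
    expec p (fun c => a * f c) = a * expec p f := by
  simp only [expec, Finset.mul_sum, mul_left_comm]

lemma div_const (f : (Fin D → Bool) → ℝ) (a : ℝ) :
    expec p (fun c => f c / a) = expec p f / a := by
  simp only [expec, Finset.sum_div, mul_div_assoc]

lemma sum {ι : Type*} (s : Finset ι) (f : ι → (Fin D → Bool) → ℝ) :
    expec p (fun c => ∑ i ∈ s, f i c) = ∑ i ∈ s, expec p (f i) := by
  simp only [expec, Finset.mul_sum]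
  exact Finset.sum_comm

lemma click (i₀ : Fin D) : expec p (fun c => if c i₀ then 1 else 0) = p i₀ := by
  -- The click indicator is absorbed as the `i₀`-th factor of the product weight,
  -- which then factorises over the positions.
  have absorb : ∀ c : Fin D → Bool,
      (∏ i, if c i then p i else 1 - p i) * (if c i₀ then 1 else 0) =
        ∏ i, (if c i then p i else 1 - p i) * (if i = i₀ then (if c i then 1 else 0) else 1) := by
    intro c
    rw [Finset.prod_mul_distrib, Fintype.prod_ite_eq']
  rw [expec, Finset.sum_congr rfl fun c _ => absorb c,
    ← Fintype.prod_sum (fun i (b : Bool) =>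
      (if b then p i else 1 - p i) * (if i = i₀ then (if b then 1 else 0) else 1))]
  rw [Fintype.prod_eq_single i₀ fun i hi => by simp [hi]]
  simp

end expec

lemma expec_drEstimator {D : ℕ} (p : Fin D → ℝ) (γimp : ℝ) (b a w : Fin D → ℝ) :
    expec p (fun c => γimp + (1 / (D : ℝ)) *
        ∑ i, ((if c i then (1 : ℝ) else 0) - b i - a i * γimp) / w i) =
      γimp + (1 / (D : ℝ)) * ∑ i, (p i - b i - a i * γimp) / w i := by
  simp only [expec.add, expec.const_mul, expec.sum, expec.div_const, expec.sub, expec.click,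
    expec.const]

theorem doubly_robust_general (D : ℕ) (hD : 0 < D) (ks : Fin D → ℕ)
    (α β αhat βhat αtilde : ℕ → ℝ) (γ γimp : ℝ)
    (hαhat : ∀ k, αhat k ≠ 0)
    (hta : ∀ i, αtilde (ks i) = α (ks i)) (hb : ∀ i, βhat (ks i) = β (ks i))
    (h : (∀ i, αhat (ks i) = α (ks i)) ∨ γimp = γ) :
    expec (fun i => α (ks i) * γ + β (ks i))
        (fun c => γimp + (1 / (D : ℝ)) *
          ∑ i, ((if c i then (1:ℝ) else 0) - βhat (ks i) - αtilde (ks i) * γimp) / αhat (ks i))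
      = γ := by
  rw [expec_drEstimator]
  have residual : ∀ i, (α (ks i) * γ + β (ks i) - βhat (ks i) - αtilde (ks i) * γimp) /
      αhat (ks i) = α (ks i) / αhat (ks i) * (γ - γimp) := by
    intro i
    rw [hb, hta]
    ring
  simp only [residual]
  rcases h with hα | rfl
  · simp only [← hα, div_self (hαhat _), one_mul, Finset.sum_const, Finset.card_univ,
      Fintype.card_fin, nsmul_eq_mul]
    field_simp [hD.ne']
    ring
  · simp

/-- doubly robustness. If α̃_k = α_k and β̂_k = β_k for all positions in
the data, then the DR estimator is unbiased whenever either the propensity model is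
correct (α̂_k = α_k for all k) or the imputation is perfect (γ̂^imp = γ). -/
theorem doubly_robust (D : ℕ) (hD : 0 < D) (ks : Fin D → ℕ)
    (α β αhat βhat αtilde : ℕ → ℝ) (γ γimp : ℝ)
    (hαhat : ∀ k, αhat k ≠ 0)
    (hp : ∀ i, α (ks i) * γ + β (ks i) ∈ Set.Icc (0:ℝ) 1)
    (hta : ∀ i, αtilde (ks i) = α (ks i)) (hb : ∀ i, βhat (ks i) = β (ks i))
    (h : (∀ i, αhat (ks i) = α (ks i)) ∨ γimp = γ) :
    expec (fun i => α (ks i) * γ + β (ks i))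
        (fun c => γimp + (1 / (D : ℝ)) *
          ∑ i, ((if c i then (1:ℝ) else 0) - βhat (ks i) - αtilde (ks i) * γimp) / αhat (ks i))
      = γ :=
  doubly_robust_general D hD ks α β αhat βhat αtilde γ γimp hαhat hta hb h
end
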